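/- Let F : ℝ^d → ℝ attain a strict global minimum at x* and suppose exp(-F/T) is integrable for every T > 0. Define f^q_T(x) = exp(-F(x)/T)/∫exp(-F(y)/T)dy. If F is continuous and {x : F(x) ≤ F(x*) + δ} is bounded for some δ > 0, then for every ε > 0, ∫_{|x-x*|>ε} f^q_T(x) dx → 0 as T → 0⁺, i.e., the Gibbs measures concentrate at the global minimizer. -/

import Mathlib

open Real MeasureTheory Filter Topology

/-!
Compactness of the sublevel set and strictness of the minimum give a gap: `F ≥ F x* + c` off the
`ε`-ball, while `F ≤ F x* + c / 2` on a small ball around `x*` by continuity. Factoring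
`exp (-F / T) = exp (-F (1/T - 1)) exp (-F)` bounds the tail mass by
`exp (-(F x* + c) (1/T - 1)) ∫ exp (-F)`, and the small ball bounds the partition function below
by `vol · exp (-(F x* + c / 2) / T)`, so the Gibbs mass of the tail is `O (exp (-c / (2T)))`.
-/

theorem exists_pos_add_le_of_isCompact_sublevel {X : Type*} [TopologicalSpace X] {F : X → ℝ}
    (hF : Continuous F) {x₀ : X} (hmin : ∀ x, x ≠ x₀ → F x₀ < F x) {δ : ℝ}
    (hδ : 0 < δ) (hK : IsCompact {x | F x ≤ F x₀ + δ}) {C : Set X} (hC : IsClosed C)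
    (hx₀ : x₀ ∉ C) :
    ∃ c, 0 < c ∧ ∀ x ∈ C, F x₀ + c ≤ F x := by
  obtain ⟨a, hx₀a, ha⟩ := (hK.inter_right hC).exists_forall_le' hF.continuousOn
    fun x hx => hmin x fun h => hx₀ (h ▸ hx.2)
  refine ⟨min δ (a - F x₀), lt_min hδ (sub_pos.2 hx₀a), fun x hx => ?_⟩
  by_cases hxK : F x ≤ F x₀ + δ
  · linarith [ha x ⟨hxK, hx⟩, min_le_right δ (a - F x₀)]
  · linarith [min_le_left δ (a - F x₀)]

section Gibbs

variable {α : Type*} [MeasurableSpace α] {μ : Measure α} {F : α → ℝ} {T : ℝ}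

theorem measureReal_mul_exp_le_integral_exp {s : Set α} {a : ℝ}
    (hint : Integrable (fun x => exp (-F x / T)) μ) (hT : 0 < T) (hs : MeasurableSet s)
    (hμs : μ s ≠ ⊤) (hFs : ∀ x ∈ s, F x ≤ a) :
    μ.real s * exp (-a / T) ≤ ∫ x, exp (-F x / T) ∂μ :=
  calc μ.real s * exp (-a / T) ≤ ∫ x in s, exp (-F x / T) ∂μ := by
        rw [mul_comm]
        refine setIntegral_ge_of_const_le_real hs hμs (fun x hx => ?_) hint.integrableOn
        gcongr
        exact hFs x hx
    _ ≤ ∫ x, exp (-F x / T) ∂μ :=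
        setIntegral_le_integral hint (Eventually.of_forall fun _ => (exp_pos _).le)

theorem setIntegral_exp_le_exp_mul_integral_exp {A : Set α} {b : ℝ}
    (hint : Integrable (fun x => exp (-F x)) μ) (hT : 0 < T) (hT1 : T ≤ 1)
    (hA : MeasurableSet A) (hFA : ∀ x ∈ A, b ≤ F x) :
    ∫ x in A, exp (-F x / T) ∂μ ≤ exp (-b * (T⁻¹ - 1)) * ∫ x, exp (-F x) ∂μ := by
  have hinv_sub_one : 0 ≤ T⁻¹ - 1 := sub_nonneg.2 (one_le_inv₀ hT |>.2 hT1)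
  have hpt : ∀ x ∈ A, exp (-F x / T) ≤ exp (-b * (T⁻¹ - 1)) * exp (-F x) := by
    intro x hx
    rw [← exp_add, div_eq_mul_inv]
    have := mul_le_mul_of_nonneg_right (neg_le_neg (hFA x hx)) hinv_sub_one
    gcongr
    linarith
  calc ∫ x in A, exp (-F x / T) ∂μ
      ≤ ∫ x in A, exp (-b * (T⁻¹ - 1)) * exp (-F x) ∂μ :=
        integral_mono_of_nonneg (Eventually.of_forall fun _ => (exp_pos _).le)
          (hint.const_mul _).integrableOn (ae_restrict_of_forall_mem hA hpt)
    _ = exp (-b * (T⁻¹ - 1)) * ∫ x in A, exp (-F x) ∂μ := integral_const_mul _ _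
    _ ≤ exp (-b * (T⁻¹ - 1)) * ∫ x, exp (-F x) ∂μ :=
        mul_le_mul_of_nonneg_left
          (setIntegral_le_integral hint (Eventually.of_forall fun _ => (exp_pos _).le))
          (exp_pos _).le

theorem tendsto_exp_neg_div_nhdsGT_zero {c : ℝ} (hc : 0 < c) :
    Tendsto (fun T : ℝ => exp (-c / T)) (𝓝[>] 0) (𝓝 0) := by
  refine tendsto_exp_atBot.comp <|
    (tendsto_neg_atTop_atBot.comp (tendsto_inv_nhdsGT_zero.const_mul_atTop hc)).congr fun T => ?_
  simp only [Function.comp_apply]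
  ring

theorem tendsto_gibbs_setIntegral_zero {s A : Set α} {a b : ℝ}
    (hint : ∀ T : ℝ, 0 < T → Integrable (fun x => exp (-F x / T)) μ)
    (hs : MeasurableSet s) (hμs₀ : μ s ≠ 0) (hμs : μ s ≠ ⊤)
    (hFs : ∀ x ∈ s, F x ≤ a)
    (hA : MeasurableSet A) (hFA : ∀ x ∈ A, b ≤ F x) (hab : a < b) :
    Tendsto (fun T => ∫ x in A, exp (-F x / T) / ∫ y, exp (-F y / T) ∂μ ∂μ)
      (𝓝[>] 0) (𝓝 0) := by
  have hint₁ : Integrable (fun x => exp (-F x)) μ := by simpa using hint 1 one_pos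
  have hμs_pos : 0 < μ.real s := ENNReal.toReal_pos hμs₀ hμs
  have hbound : ∀ T ∈ Set.Ioo (0 : ℝ) 1,
      ∫ x in A, exp (-F x / T) / ∫ y, exp (-F y / T) ∂μ ∂μ
        ≤ (∫ x, exp (-F x) ∂μ) * exp b / μ.real s * exp (-(b - a) / T) := by
    rintro T ⟨hT, hT1⟩
    have hexp : exp (-b * (T⁻¹ - 1)) = exp b * exp (-(b - a) / T) * exp (-a / T) := by
      rw [← exp_add, ← exp_add]
      congr 1
      field_simp
      ring
    rw [integral_div]
    refine (div_le_div₀ (mul_nonneg (exp_pos _).le (integral_nonneg fun _ => (exp_pos _).le))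
      (setIntegral_exp_le_exp_mul_integral_exp hint₁ hT hT1.le hA hFA)
      (mul_pos hμs_pos (exp_pos _))
      (measureReal_mul_exp_le_integral_exp (hint T hT) hT hs hμs hFs)).trans_eq ?_
    rw [hexp]
    field_simp
  have hnonneg : ∀ T, 0 ≤ ∫ x in A, exp (-F x / T) / ∫ y, exp (-F y / T) ∂μ ∂μ :=
    fun T => setIntegral_nonneg hA fun _ _ =>
      div_nonneg (exp_pos _).le (integral_nonneg fun _ => (exp_pos _).le)
  refine squeeze_zero' (Eventually.of_forall hnonneg)
    (eventually_of_mem (Ioo_mem_nhdsGT one_pos) hbound) ?_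
  simpa using (tendsto_exp_neg_div_nhdsGT_zero (sub_pos.2 hab)).const_mul
    ((∫ x, exp (-F x) ∂μ) * exp b / μ.real s)

end Gibbs

/-- Concentration of Gibbs measures at the global minimizer: if `F` is continuous with a
strict global minimum at `x*`, `exp(-F/T)` is integrable for every `T > 0`, and some
sublevel set `{F ≤ F(x*) + δ}` is bounded, then for every `ε > 0` the Gibbs mass outside
the ball of radius `ε` around `x*` vanishes as `T → 0⁺`. -/
theorem gibbs_concentration {d : ℕ}
    (F : EuclideanSpace ℝ (Fin d) → ℝ) (hF_cont : Continuous F)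
    (xstar : EuclideanSpace ℝ (Fin d))
    (hmin : ∀ x, x ≠ xstar → F xstar < F x)
    (hint : ∀ T : ℝ, 0 < T → Integrable (fun x => Real.exp (-F x / T)))
    (δ : ℝ) (hδ : 0 < δ)
    (hbdd : Bornology.IsBounded {x | F x ≤ F xstar + δ}) :
    ∀ ε : ℝ, 0 < ε →
      Tendsto (fun T =>
          ∫ x in {x | ε < dist x xstar},
            Real.exp (-F x / T) / ∫ y, Real.exp (-F y / T))
        (𝓝[>] 0) (𝓝 0) := by
  intro ε hε
  obtain ⟨c, hc, hFc⟩ := exists_pos_add_le_of_isCompact_sublevel hF_cont hmin hδ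
    (Metric.isCompact_of_isClosed_isBounded (isClosed_le hF_cont continuous_const) hbdd)
    (C := {x | ε ≤ dist x xstar})
    (isClosed_le continuous_const (continuous_id.dist continuous_const))
    (by simpa using hε)
  obtain ⟨r, hr, hball⟩ := Metric.eventually_nhds_iff_ball.1 <|
    hF_cont.continuousAt.eventually (gt_mem_nhds (by linarith : F xstar < F xstar + c / 2))
  exact tendsto_gibbs_setIntegral_zero hint measurableSet_ball
    (Metric.measure_ball_pos volume xstar hr).ne' measure_ball_lt_top.ne
    (fun x hx => (hball x hx).le)
    (measurableSet_lt measurable_const (measurable_id.dist measurable_const))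
    (fun x (hx : ε < dist x xstar) => hFc x hx.le) (by linarith : F xstar + c / 2 < F xstar + c)
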